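/- arXiv:2507.14620 — 6 statements merged into one kernel-verified Lean document; each statement's English description precedes it below -/
import Mathlib

section
/- Let G be a finite simple graph and S ⊆ V(G) with |S| = s. The polynomial E(G;S,q) has degree at most 1 (is linear) if and only if for all k with 1 ≤ k ≤ s, Σ_{W ⊆ S, |W| = k} |Obs(G;W)| = C(s−1, k−1) · Σ_{v ∈ S} |Obs(G;{v})|, where C(·,·) denotes a binomial coefficient. -/
open Polynomial

/-- The closed neighborhood `N[S]` of a set of vertices. -/
def closedNbhd {V : Type*} (G : SimpleGraph V) (S : Set V) : Set V :=
  ⋃ v ∈ S, insert v (G.neighborSet v)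

/-- A set `B` is closed under the zero forcing step: whenever `x ∈ B` has exactly one
neighbor `y` outside `B`, then `y` is already in `B`. -/
def PDClosed {V : Type*} (G : SimpleGraph V) (B : Set V) : Prop :=
  ∀ x ∈ B, ∀ y : V, G.neighborSet x \ B = {y} → y ∈ B

/-- `Obs G S` is the set of observed vertices of the power domination process started with
PMU placement `S`: the least superset of `N[S]` closed under the zero forcing step. -/
def Obs {V : Type*} (G : SimpleGraph V) (S : Set V) : Set V :=
  ⋂₀ {B : Set V | closedNbhd G S ⊆ B ∧ PDClosed G B}

/-- The expected value polynomial
`E(G;S,q) = Σ_{W ⊆ S} |Obs(G;W)| q^{|S∖W|} (1−q)^{|W|}`. -/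
noncomputable def expol {V : Type*} (G : SimpleGraph V) (S : Finset V) : Polynomial ℝ :=
  ∑ W ∈ S.powerset,
    ((Obs G ↑W).ncard : Polynomial ℝ) * X ^ (S.card - W.card) * (1 - X) ^ W.card

/-!
Grouping the subsets `W ⊆ S` by size gives `E = Σ_{k ≤ s} a_k q^{s-k} (1-q)^k` with
`a_k = Σ_{|W| = k} |Obs(G;W)|`, and the polynomials `q^{s-k} (1-q)^k` are linearly independent
(evaluate at `q = 0` and divide by `q`). Since `a_0 = |Obs(G;∅)| = 0`, `E = (1-q) F` with
`F = Σ_{j < s} a_{j+1} q^{s-1-j} (1-q)^j`, so `E` is linear iff `F` is a constant `c`.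
By the binomial theorem `c = Σ_j c·C(s-1,j) q^{s-1-j} (1-q)^j`, so by independence this happens
iff `a_{j+1} = c·C(s-1,j)` for all `j`, and `j = 0` identifies `c = a_1`.
-/

namespace Polynomial

variable {R : Type*} [CommRing R]

/-- The binary form `Σ_{k ≤ n} c k * x ^ (n - k) * y ^ k` evaluated at `(X, 1 - X)`. -/
noncomputable def homogSum (n : ℕ) (c : ℕ → R) : R[X] :=
  ∑ k ∈ Finset.range (n + 1), C (c k) * X ^ (n - k) * (1 - X) ^ k

theorem homogSum_zero (c : ℕ → R) : homogSum 0 c = C (c 0) := by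
  simp [homogSum]

theorem homogSum_succ (n : ℕ) (c : ℕ → R) :
    homogSum (n + 1) c = X * homogSum n c + C (c (n + 1)) * (1 - X) ^ (n + 1) := by
  rw [homogSum, Finset.sum_range_succ, Nat.sub_self, pow_zero, mul_one, homogSum,
    Finset.mul_sum]
  congr 1
  refine Finset.sum_congr rfl fun k hk => ?_
  rw [Nat.sub_add_comm (Finset.mem_range_succ_iff.1 hk), pow_succ]
  ring

theorem homogSum_succ' (n : ℕ) (c : ℕ → R) :
    homogSum (n + 1) c = C (c 0) * X ^ (n + 1) + (1 - X) * homogSum n (fun k => c (k + 1)) := by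
  rw [homogSum, Finset.sum_range_succ', homogSum, Finset.mul_sum, add_comm]
  simp only [Nat.sub_zero, pow_zero, mul_one, Nat.add_sub_add_right, pow_succ]
  congr 1
  exact Finset.sum_congr rfl fun k _ => by ring

theorem eq_of_homogSum_eq {n : ℕ} {c d : ℕ → R} (h : homogSum n c = homogSum n d) :
    ∀ k ≤ n, c k = d k := by
  induction n with
  | zero =>
    intro k hk
    rw [Nat.le_zero.1 hk]
    simpa [homogSum_zero] using h
  | succ n ih =>
    simp only [homogSum_succ] at h
    -- At `X = 0` only the last term survives.
    have hlast : c (n + 1) = d (n + 1) := by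
      simpa using congrArg (eval 0) h
    rw [hlast, add_left_inj] at h
    intro k hk
    rcases Nat.lt_or_eq_of_le hk with hk | rfl
    · exact ih (isRegular_X.left h) k (Nat.lt_succ_iff.1 hk)
    · exact hlast

theorem homogSum_const_mul (n : ℕ) (r : R) (c : ℕ → R) :
    homogSum n (fun k => r * c k) = C r * homogSum n c := by
  simp only [homogSum, Finset.mul_sum, C_mul, mul_assoc]

theorem homogSum_choose (n : ℕ) : homogSum n (fun k => (n.choose k : R)) = 1 := by
  have h := add_pow (1 - X : R[X]) X n
  rw [sub_add_cancel, one_pow] at h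
  rw [h, homogSum]
  refine Finset.sum_congr rfl fun k _ => ?_
  rw [map_natCast]
  ring

theorem homogSum_eq_C_iff {n : ℕ} {c : ℕ → R} {r : R} :
    homogSum n c = C r ↔ ∀ k ≤ n, c k = r * n.choose k := by
  have hC : C r = homogSum n (fun k => r * n.choose k) := by
    rw [homogSum_const_mul, homogSum_choose, mul_one]
  refine ⟨fun h => eq_of_homogSum_eq (h.trans hC), fun h => hC ▸ ?_⟩
  exact Finset.sum_congr rfl fun k hk => by rw [h k (Finset.mem_range_succ_iff.1 hk)]

theorem degree_one_sub_X_mul_le_one_iff [Nontrivial R] {p : R[X]} :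
    ((1 - X) * p).degree ≤ 1 ↔ p.degree ≤ 0 := by
  rw [← neg_sub, neg_mul, degree_neg, ← C_1, mul_comm, (monic_X_sub_C 1).degree_mul,
    degree_X_sub_C]
  simpa using WithBot.add_le_add_iff_right (x := p.degree) (y := 0) (z := 1) WithBot.coe_ne_bot

theorem degree_homogSum_le_zero_iff {n : ℕ} {c : ℕ → R} :
    (homogSum n c).degree ≤ 0 ↔ ∀ k ≤ n, c k = c 0 * n.choose k := by
  refine ⟨fun h => ?_, fun h => homogSum_eq_C_iff.2 h ▸ degree_C_le⟩
  have hc := homogSum_eq_C_iff.1 (eq_C_of_degree_le_zero h)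
  have hc0 : c 0 = (homogSum n c).coeff 0 := by simpa using hc 0 n.zero_le
  rwa [← hc0] at hc

theorem degree_homogSum_succ_le_one_iff [Nontrivial R] {n : ℕ} {c : ℕ → R} (hc : c 0 = 0) :
    (homogSum (n + 1) c).degree ≤ 1 ↔ ∀ k ≤ n, c (k + 1) = c 1 * n.choose k := by
  rw [homogSum_succ', hc, C_0, zero_mul, zero_add, degree_one_sub_X_mul_le_one_iff,
    degree_homogSum_le_zero_iff]

end Polynomial

theorem obs_empty {V : Type*} (G : SimpleGraph V) : Obs G ∅ = ∅ :=
  Set.subset_empty_iff.1 <| Set.sInter_subset_of_mem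
    ⟨by simp [closedNbhd], fun _ hx => hx.elim⟩

noncomputable def obsCardSum {V : Type*} (G : SimpleGraph V) (S : Finset V) (k : ℕ) : ℕ :=
  ∑ W ∈ S.powersetCard k, (Obs G ↑W).ncard

theorem obsCardSum_zero {V : Type*} (G : SimpleGraph V) (S : Finset V) :
    obsCardSum G S 0 = 0 := by
  simp [obsCardSum, obs_empty]

theorem obsCardSum_one {V : Type*} (G : SimpleGraph V) (S : Finset V) :
    obsCardSum G S 1 = ∑ v ∈ S, (Obs G {v}).ncard := by
  simp [obsCardSum, Finset.powersetCard_one]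

theorem expol_eq_homogSum {V : Type*} (G : SimpleGraph V) (S : Finset V) :
    expol G S = homogSum S.card (fun k => (obsCardSum G S k : ℝ)) := by
  rw [expol, Finset.sum_powerset, homogSum]
  refine Finset.sum_congr rfl fun k _ => ?_
  rw [obsCardSum, Nat.cast_sum, map_sum, Finset.sum_mul, Finset.sum_mul]
  refine Finset.sum_congr rfl fun W hW => ?_
  rw [(Finset.mem_powersetCard.1 hW).2, map_natCast]

theorem stmt1_general {V : Type} (G : SimpleGraph V) (S : Finset V)
    (s : ℕ) (hs : S.card = s) :
    (expol G S).degree ≤ 1 ↔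
      ∀ k, 1 ≤ k → k ≤ s →
        ∑ W ∈ Finset.powersetCard k S, (Obs G ↑W).ncard
          = Nat.choose (s - 1) (k - 1) * ∑ v ∈ S, (Obs G {v}).ncard := by
  rw [expol_eq_homogSum, hs]
  cases s with
  | zero =>
    refine iff_of_true ?_ fun k hk1 hk0 => by omega
    simp [homogSum_zero, obsCardSum_zero]
  | succ n =>
    rw [degree_homogSum_succ_le_one_iff (by simp [obsCardSum_zero]), Nat.add_sub_cancel,
      ← obsCardSum_one]
    constructor
    · rintro h (_ | k) hk1 hkn
      · omega
      · exact_mod_cast (h k (by omega)).trans (mul_comm _ _)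
    · intro h k hk
      exact_mod_cast (h (k + 1) k.succ_pos (by omega)).trans (mul_comm _ _)

theorem stmt1 {V : Type} [Fintype V] (G : SimpleGraph V) (S : Finset V)
    (s : ℕ) (hs : S.card = s) :
    (expol G S).degree ≤ 1 ↔
      ∀ k, 1 ≤ k → k ≤ s →
        ∑ W ∈ Finset.powersetCard k S, (Obs G ↑W).ncard
          = Nat.choose (s - 1) (k - 1) * ∑ v ∈ S, (Obs G {v}).ncard :=
  stmt1_general G S s hs
end

section
/- Let G be a finite simple graph and S ⊆ V(G). If for every subset X ⊆ S one has |Obs(G;X)| = Σ_{v ∈ X} |Obs(G;{v})|, then E(G;S,q) = |Obs(G;S)| · (1 − q). -/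
open Polynomial

/-- Binomial-type identity: `Σ_{U ⊆ T} X^{|T|-|U|} (1-X)^{|U|} = 1`. -/
lemma pdBaseSum {V : Type} [DecidableEq V] (T : Finset V) :
    ∑ U ∈ T.powerset, (X : Polynomial ℝ) ^ (T.card - U.card) * (1 - X) ^ U.card = 1 := by
  have hp := Finset.prod_add (fun _ : V => (1 - X : Polynomial ℝ)) (fun _ => X) T
  simp only [sub_add_cancel, Finset.prod_const, one_pow] at hp
  refine Eq.trans ?_ hp.symm
  apply Finset.sum_congr rfl
  intro U hU
  rw [Finset.card_sdiff_of_subset (Finset.mem_powerset.mp hU), mul_comm]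

/-- For `v ∈ S`, `Σ_{v ∈ W ⊆ S} X^{|S|-|W|} (1-X)^{|W|} = 1 - X`. -/
lemma pdInnerSum {V : Type} [DecidableEq V] (S : Finset V) (v : V) (hv : v ∈ S) :
    ∑ W ∈ S.powerset.filter (fun W => v ∈ W),
      (X : Polynomial ℝ) ^ (S.card - W.card) * (1 - X) ^ W.card = 1 - X := by
  have key : ∑ W ∈ S.powerset.filter (fun W => v ∈ W),
      (X : Polynomial ℝ) ^ (S.card - W.card) * (1 - X) ^ W.card
      = ∑ U ∈ (S.erase v).powerset,
        ((X : Polynomial ℝ) ^ ((S.erase v).card - U.card) * (1 - X) ^ U.card) * (1 - X) := by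
    refine Finset.sum_bij' (fun W _ => W.erase v) (fun U _ => insert v U) ?hi ?hj ?left ?right ?hf
    case hi =>
      intro W hW
      simp only [Finset.mem_filter, Finset.mem_powerset] at hW
      exact Finset.mem_powerset.mpr (Finset.erase_subset_erase v hW.1)
    case hj =>
      intro U hU
      simp only [Finset.mem_powerset] at hU
      simp only [Finset.mem_filter, Finset.mem_powerset]
      exact ⟨Finset.insert_subset hv (hU.trans (Finset.erase_subset v S)),
        Finset.mem_insert_self v U⟩
    case left =>
      intro W hW
      simp only [Finset.mem_filter] at hW
      exact Finset.insert_erase hW.2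
    case right =>
      intro U hU
      simp only [Finset.mem_powerset] at hU
      exact Finset.erase_insert (fun hvU => Finset.notMem_erase v S (hU hvU))
    case hf =>
      intro W hW
      simp only [Finset.mem_filter, Finset.mem_powerset] at hW
      have h1 : 1 ≤ W.card := Finset.card_pos.mpr ⟨v, hW.2⟩
      have h2 : W.card ≤ S.card := Finset.card_le_card hW.1
      rw [Finset.card_erase_of_mem hW.2, Finset.card_erase_of_mem hv]
      have e1 : S.card - W.card = (S.card - 1) - (W.card - 1) := by omega
      have e2 : (1 - X : Polynomial ℝ) ^ W.card = (1 - X) ^ (W.card - 1) * (1 - X) := by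
        rw [← pow_succ]; congr 1; omega
      rw [e1, e2]; ring
  rw [key, ← Finset.sum_mul, pdBaseSum, one_mul]

theorem stmt2 {V : Type} [Fintype V] (G : SimpleGraph V) (S : Finset V)
    (h : ∀ X ⊆ S, (Obs G ↑X).ncard = ∑ v ∈ X, (Obs G {v}).ncard) :
    expol G S = ((Obs G ↑S).ncard : Polynomial ℝ) * (1 - X) := by
  classical
  unfold expol
  have hrw : ∀ W ∈ S.powerset,
      ((Obs G ↑W).ncard : Polynomial ℝ) * X ^ (S.card - W.card) * (1 - X) ^ W.card
      = ∑ v ∈ W, ((Obs G {v}).ncard : Polynomial ℝ)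
          * (X ^ (S.card - W.card) * (1 - X) ^ W.card) := by
    intro W hW
    rw [h W (Finset.mem_powerset.mp hW)]
    push_cast
    rw [mul_assoc, Finset.sum_mul]
  rw [Finset.sum_congr rfl hrw]
  rw [Finset.sum_comm' (s := S.powerset) (t := fun W => W) (t' := S)
    (s' := fun v => S.powerset.filter (fun W => v ∈ W))
    (by intro W v; simp only [Finset.mem_filter, Finset.mem_powerset]; tauto)]
  have hin : ∀ v ∈ S, ∑ W ∈ S.powerset.filter (fun W => v ∈ W),
      ((Obs G {v}).ncard : Polynomial ℝ) * (X ^ (S.card - W.card) * (1 - X) ^ W.card)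
      = ((Obs G {v}).ncard : Polynomial ℝ) * (1 - X) := by
    intro v hv
    rw [← Finset.mul_sum, pdInnerSum S v hv]
  rw [Finset.sum_congr rfl hin, ← Finset.sum_mul, h S le_rfl]
  push_cast
  ring
end

section
/- Let ℓ ≤ s be natural numbers with ℓ ≥ 1, and for 1 ≤ k ≤ s and 1 ≤ i ≤ ℓ define integers α_{s,ℓ}(k,i) by downward recursion on i: α_{s,ℓ}(k,i) := C(s−i, k−i) − Σ_{j=i+1}^{ℓ} α_{s,ℓ}(k,j) · C(s−i, j−i), where C(·,·) denotes a binomial coefficient (so α_{s,ℓ}(k,ℓ) = C(s−ℓ, k−ℓ)). Then for every i with 1 ≤ i ≤ ℓ, the polynomial Σ_{k=1}^{s} α_{s,ℓ}(k,i) · q^{s−k} · (1−q)^{k} in the variable q has degree at most ℓ. -/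
open Polynomial

/-- The binomial coefficient `C(s−i, k−i)`, interpreted as `0` when `k < i`
(i.e. when the lower index `k − i` would be negative). -/
def binShift (s k i : ℕ) : ℤ :=
  if i ≤ k then ((s - i).choose (k - i) : ℤ) else 0

/-- `alphaCoef s ℓ k i = α_{s,ℓ}(k,i)`, defined by downward recursion on `i`:
`α_{s,ℓ}(k,i) = C(s−i, k−i) − Σ_{j=i+1}^{ℓ} α_{s,ℓ}(k,j) · C(s−i, j−i)`. -/
def alphaCoef (s ℓ k i : ℕ) : ℤ :=
  binShift s k i -
    ∑ j ∈ (Finset.Ioc i ℓ).attach,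
      alphaCoef s ℓ k j.1 * (((s - i).choose (j.1 - i) : ℕ) : ℤ)
termination_by ℓ - i
decreasing_by
  have h := Finset.mem_Ioc.mp j.2
  omega

/-!
Write `P_i` for the polynomial of the theorem. By the binomial theorem,
`Σ_k C(s−i, k−i) q^{s−k} (1−q)^k = (1−q)^i (q + (1−q))^{s−i} = (1−q)^i`, so the recursion
defining `α` becomes `P_i = (1−q)^i − Σ_{i<j≤ℓ} C(s−i, j−i) P_j`. Downward induction on `i`
then shows that every `P_i` is a combination of the powers `(1−q)^j` with `i ≤ j ≤ ℓ`.
-/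

open Finset

section
variable {R : Type*} [CommRing R]

theorem sum_binShift_mul_pow_mul_pow {x y : R} (hxy : x + y = 1) {s i : ℕ} (hi : 1 ≤ i)
    (his : i ≤ s) :
    ∑ k ∈ Icc 1 s, (binShift s k i : R) * y ^ (s - k) * x ^ k = x ^ i := by
  have hvanish : ∀ k ∈ Icc 1 s, k ∉ Icc i s → (binShift s k i : R) * y ^ (s - k) * x ^ k = 0 := by
    intro k hk hki
    have hik : ¬ i ≤ k := fun h => hki (mem_Icc.2 ⟨h, (mem_Icc.1 hk).2⟩)
    simp [binShift, hik]
  rw [← sum_subset (Icc_subset_Icc_left hi) hvanish, ← Ico_add_one_right_eq_Icc,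
    sum_Ico_eq_sum_range, show s + 1 - i = s - i + 1 by omega]
  calc ∑ m ∈ range (s - i + 1), (binShift s (i + m) i : R) * y ^ (s - (i + m)) * x ^ (i + m)
      = x ^ i * ∑ m ∈ range (s - i + 1), x ^ m * y ^ (s - i - m) * (s - i).choose m := by
        rw [mul_sum]
        refine sum_congr rfl fun m _ => ?_
        simp only [binShift, le_add_iff_nonneg_right, zero_le, if_true, add_tsub_cancel_left,
          Nat.sub_add_eq, pow_add, Int.cast_natCast]
        ring
    _ = x ^ i := by rw [← add_pow, hxy, one_pow, mul_one]

theorem sum_binShift_mem_degreeLE {s i : ℕ} (hi : 1 ≤ i) :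
    ∑ k ∈ Icc 1 s, (binShift s k i : R[X]) * X ^ (s - k) * (1 - X) ^ k ∈ degreeLE R i := by
  rcases le_or_gt i s with his | hsi
  · rw [sum_binShift_mul_pow_mul_pow (sub_add_cancel (1 : R[X]) X) hi his, mem_degreeLE]
    have hdeg : (1 - X : R[X]).degree ≤ 1 := by compute_degree
    simpa using degree_pow_le_of_le i hdeg
  · convert zero_mem (degreeLE R i)
    refine sum_eq_zero fun k hk => ?_
    have hik : ¬ i ≤ k := by have := (mem_Icc.1 hk).2; omega
    simp [binShift, hik]

variable (R) in
noncomputable def alphaPoly (s ℓ i : ℕ) : R[X] :=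
  ∑ k ∈ Icc 1 s, (alphaCoef s ℓ k i : R[X]) * X ^ (s - k) * (1 - X) ^ k

theorem alphaPoly_eq (s ℓ i : ℕ) :
    alphaPoly R s ℓ i = ∑ k ∈ Icc 1 s, (binShift s k i : R[X]) * X ^ (s - k) * (1 - X) ^ k
      - ∑ j ∈ Ioc i ℓ, (s - i).choose (j - i) • alphaPoly R s ℓ j := by
  simp only [alphaPoly, smul_sum]
  rw [sum_comm, ← sum_sub_distrib]
  refine sum_congr rfl fun k _ => ?_
  rw [alphaCoef, ← sum_attach (Ioc i ℓ)]
  push_cast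
  rw [sub_mul, sub_mul, sum_mul, sum_mul]
  congr 1
  refine sum_congr rfl fun j _ => ?_
  rw [nsmul_eq_mul]
  ring

theorem alphaPoly_mem_degreeLE {s ℓ i : ℕ} (hi : 1 ≤ i) (hiℓ : i ≤ ℓ) :
    alphaPoly R s ℓ i ∈ degreeLE R ℓ := by
  induction h : ℓ - i using Nat.strong_induction_on generalizing i with
  | _ n ih =>
  rw [alphaPoly_eq]
  refine sub_mem (degreeLE_mono (by exact_mod_cast hiℓ) (sum_binShift_mem_degreeLE hi))
    (sum_mem fun j hj => nsmul_mem ?_ _)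
  have hj := mem_Ioc.1 hj
  exact ih (ℓ - j) (by omega) (by omega) hj.2 rfl

end

theorem stmt3_general (s ℓ : ℕ) (i : ℕ) (hi : 1 ≤ i) (hiℓ : i ≤ ℓ) :
    (∑ k ∈ Finset.Icc 1 s,
        ((alphaCoef s ℓ k i : ℤ) : Polynomial ℝ) * X ^ (s - k) * (1 - X) ^ k).degree
      ≤ (ℓ : WithBot ℕ) :=
  mem_degreeLE.1 (alphaPoly_mem_degreeLE hi hiℓ)

theorem stmt3 (s ℓ : ℕ) (hℓ : 1 ≤ ℓ) (hℓs : ℓ ≤ s) (i : ℕ) (hi : 1 ≤ i) (hiℓ : i ≤ ℓ) :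
    (∑ k ∈ Finset.Icc 1 s,
        ((alphaCoef s ℓ k i : ℤ) : Polynomial ℝ) * X ^ (s - k) * (1 - X) ^ k).degree
      ≤ (ℓ : WithBot ℕ) :=
  stmt3_general s ℓ i hi hiℓ
end

section
/- Let G be a finite simple graph and A, B ⊆ V(G) with |A| = |B| =: a. If for every k with 1 ≤ k ≤ a one has Σ_{A' ⊆ A, |A'| = k} |Obs(G;A')| ≤ Σ_{B' ⊆ B, |B'| = k} |Obs(G;B')|, then E(G;A,q) ≤ E(G;B,q) for every q ∈ [0,1]. Moreover, if the hypothesis inequality is strict for some k with 1 ≤ k ≤ a, then E(G;A,q) < E(G;B,q) for every q ∈ (0,1). -/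
open Polynomial

/-- The expected number of observed vertices, evaluated at a real failure probability `q`. -/
noncomputable def expolEval {V : Type*} (G : SimpleGraph V) (S : Finset V) (q : ℝ) : ℝ :=
  ∑ W ∈ S.powerset,
    ((Obs G ↑W).ncard : ℝ) * q ^ (S.card - W.card) * (1 - q) ^ W.card


lemma expolEval_eq {V : Type} (G : SimpleGraph V) (S : Finset V) (q : ℝ) :
    expolEval G S q = ∑ k ∈ Finset.range (S.card + 1),
      (∑ W ∈ Finset.powersetCard k S, ((Obs G ↑W).ncard : ℝ)) * q ^ (S.card - k) * (1 - q) ^ k := by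
  rw [expolEval, Finset.sum_powerset]
  refine Finset.sum_congr rfl fun k _ => ?_
  rw [Finset.sum_mul, Finset.sum_mul]
  refine Finset.sum_congr rfl fun W hW => ?_
  rw [(Finset.mem_powersetCard.mp hW).2]

theorem stmt6 {V : Type} [Fintype V] (G : SimpleGraph V) (A B : Finset V)
    (a : ℕ) (hA : A.card = a) (hB : B.card = a)
    (h : ∀ k, 1 ≤ k → k ≤ a →
      ∑ A' ∈ Finset.powersetCard k A, (Obs G ↑A').ncard
        ≤ ∑ B' ∈ Finset.powersetCard k B, (Obs G ↑B').ncard) :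
    (∀ q ∈ Set.Icc (0 : ℝ) 1, expolEval G A q ≤ expolEval G B q) ∧
      ((∃ k, 1 ≤ k ∧ k ≤ a ∧
          ∑ A' ∈ Finset.powersetCard k A, (Obs G ↑A').ncard
            < ∑ B' ∈ Finset.powersetCard k B, (Obs G ↑B').ncard) →
        ∀ q ∈ Set.Ioo (0 : ℝ) 1, expolEval G A q < expolEval G B q) := by
  have key : ∀ q : ℝ, 0 ≤ q → q ≤ 1 →
      expolEval G B q - expolEval G A q =
        ∑ k ∈ Finset.range (a + 1),
          (((∑ B' ∈ Finset.powersetCard k B, (Obs G ↑B').ncard : ℕ) : ℝ) -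
            ((∑ A' ∈ Finset.powersetCard k A, (Obs G ↑A').ncard : ℕ) : ℝ)) *
            (q ^ (a - k) * (1 - q) ^ k) := by
    intro q _ _
    rw [expolEval_eq, expolEval_eq, hA, hB, ← Finset.sum_sub_distrib]
    refine Finset.sum_congr rfl fun k _ => ?_
    push_cast
    ring
  have hnn : ∀ q : ℝ, 0 ≤ q → q ≤ 1 → ∀ k, (0:ℝ) ≤ q ^ (a - k) * (1 - q) ^ k :=
    fun q h0 h1 k => mul_nonneg (pow_nonneg h0 _) (pow_nonneg (by linarith) _)
  have hterm : ∀ q : ℝ, 0 ≤ q → q ≤ 1 → ∀ k ∈ Finset.range (a + 1),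
      (0:ℝ) ≤ (((∑ B' ∈ Finset.powersetCard k B, (Obs G ↑B').ncard : ℕ) : ℝ) -
            ((∑ A' ∈ Finset.powersetCard k A, (Obs G ↑A').ncard : ℕ) : ℝ)) *
            (q ^ (a - k) * (1 - q) ^ k) := by
    intro q h0 h1 k hk
    rcases Nat.eq_zero_or_pos k with rfl | hk1
    · have : Finset.powersetCard 0 A = {∅} := by
        rw [Finset.powersetCard_zero]
      have hBe : Finset.powersetCard 0 B = {∅} := by
        rw [Finset.powersetCard_zero]
      rw [this, hBe]
      simp
    · refine mul_nonneg ?_ (hnn q h0 h1 k)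
      have := h k hk1 (by have := Finset.mem_range.mp hk; omega)
      have : ((∑ A' ∈ Finset.powersetCard k A, (Obs G ↑A').ncard : ℕ) : ℝ) ≤
          ((∑ B' ∈ Finset.powersetCard k B, (Obs G ↑B').ncard : ℕ) : ℝ) := by
        exact_mod_cast this
      linarith
  constructor
  · intro q hq
    have := key q hq.1 hq.2
    have hs : (0:ℝ) ≤ expolEval G B q - expolEval G A q := by
      rw [this]
      exact Finset.sum_nonneg (hterm q hq.1 hq.2)
    linarith
  · rintro ⟨k, hk1, hka, hklt⟩ q hq
    have h0 : (0:ℝ) ≤ q := le_of_lt hq.1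
    have h1 : q ≤ 1 := le_of_lt hq.2
    have hs : (0:ℝ) < expolEval G B q - expolEval G A q := by
      rw [key q h0 h1]
      refine Finset.sum_pos' (hterm q h0 h1) ⟨k, Finset.mem_range.mpr (by omega), ?_⟩
      refine mul_pos ?_ (mul_pos (pow_pos hq.1 _) (pow_pos (sub_pos.mpr hq.2) _))
      have : ((∑ A' ∈ Finset.powersetCard k A, (Obs G ↑A').ncard : ℕ) : ℝ) <
          ((∑ B' ∈ Finset.powersetCard k B, (Obs G ↑B').ncard : ℕ) : ℝ) := by
        exact_mod_cast hklt
      linarith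
    linarith
end

section
/- Let G be a finite simple graph, S ⊆ V(G), and f : S → ℕ with f(s) ≥ 1 for all s ∈ S. Let ℜ₁ := { f(S') : S' ⊆ S, |S'| ≥ 1 } and ℜ₂ := { f(S') : S' ⊆ S, |S'| ≥ 2 }, where f(T) := Σ_{t∈T} f(t). If k ∈ ℜ₁ ∖ ℜ₂, then the coefficient of q^k in E(G;M(S,f),q) is at most 0; more precisely, it equals ( Σ_{v ∈ S, f(v)=k} |Obs(G;S∖{v})| ) − |{v ∈ S : f(v)=k}| · |Obs(G;S)| ≤ 0. -/
open Polynomial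

/-- The expected value polynomial of the multiset placement `M(S,f)`:
`E(G;M,q) = Σ_{T ⊆ S} |Obs(G;T)| q^{f(S∖T)} Π_{s∈T}(1 − q^{f(s)})`.
(For `T ⊆ S` we have `f(S∖T) = f(S) − f(T)`.) -/
noncomputable def expolM {V : Type*} (G : SimpleGraph V) (S : Finset V) (f : V → ℕ) :
    Polynomial ℝ :=
  ∑ T ∈ S.powerset,
    ((Obs G ↑T).ncard : Polynomial ℝ) * X ^ ((∑ v ∈ S, f v) - ∑ v ∈ T, f v)
      * ∏ v ∈ T, (1 - X ^ f v)

lemma closedNbhd_mono' {V : Type*} (G : SimpleGraph V) {S T : Set V} (h : S ⊆ T) :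
    closedNbhd G S ⊆ closedNbhd G T :=
  Set.biUnion_subset_biUnion_left h

lemma closedNbhd_subset_Obs' {V : Type*} (G : SimpleGraph V) (S : Set V) :
    closedNbhd G S ⊆ Obs G S := fun _ hx =>
  Set.mem_sInter.mpr fun _ hB => hB.1 hx

lemma PDClosed_Obs' {V : Type*} (G : SimpleGraph V) (S : Set V) : PDClosed G (Obs G S) := by
  intro x hx y hy
  rw [Obs, Set.mem_sInter]
  intro B hB
  have hsub : Obs G S ⊆ B := Set.sInter_subset_of_mem hB
  have hyN : y ∈ G.neighborSet x \ Obs G S := by rw [hy]; rfl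
  have hsub2 : G.neighborSet x \ B ⊆ {y} := by
    intro z hz
    rw [← hy]; exact ⟨hz.1, fun hzo => hz.2 (hsub hzo)⟩
  rcases Set.subset_singleton_iff_eq.mp hsub2 with h | h
  · by_contra hyB
    have : y ∈ G.neighborSet x \ B := ⟨hyN.1, hyB⟩
    rw [h] at this; exact this
  · exact hB.2 x (hsub hx) y h

lemma Obs_mono' {V : Type*} (G : SimpleGraph V) {S T : Set V} (h : S ⊆ T) :
    Obs G S ⊆ Obs G T :=
  Set.sInter_subset_of_mem
    ⟨(closedNbhd_mono' G h).trans (closedNbhd_subset_Obs' G T), PDClosed_Obs' G T⟩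

theorem stmt10 {V : Type} [Fintype V] [DecidableEq V] (G : SimpleGraph V) (S : Finset V)
    (f : V → ℕ) (hf : ∀ v ∈ S, 1 ≤ f v) (k : ℕ)
    (hk1 : ∃ T ⊆ S, 1 ≤ T.card ∧ ∑ t ∈ T, f t = k)
    (hk2 : ¬ ∃ T ⊆ S, 2 ≤ T.card ∧ ∑ t ∈ T, f t = k) :
    (expolM G S f).coeff k
        = (∑ v ∈ S.filter (fun v => f v = k), ((Obs G ↑(S.erase v)).ncard : ℝ))
            - ((S.filter (fun v => f v = k)).card : ℝ) * ((Obs G ↑S).ncard : ℝ) ∧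
      (expolM G S f).coeff k ≤ 0 := by
  classical
  set c : Finset V → ℝ := fun T => ((Obs G ↑T).ncard : ℝ) with hc
  set F : Finset V := S.filter (fun v => f v = k) with hF
  -- k ≥ 1
  have hk_pos : 1 ≤ k := by
    obtain ⟨T₀, hT₀S, hT₀c, hT₀k⟩ := hk1
    obtain ⟨t, ht⟩ := Finset.card_pos.mp hT₀c
    calc 1 ≤ f t := hf t (hT₀S ht)
      _ ≤ ∑ t ∈ T₀, f t := Finset.single_le_sum (fun i _ => Nat.zero_le _) ht
      _ = k := hT₀k
  have hSne : S.Nonempty := by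
    obtain ⟨T₀, hT₀S, hT₀c, _⟩ := hk1
    obtain ⟨t, ht⟩ := Finset.card_pos.mp hT₀c
    exact ⟨t, hT₀S ht⟩
  -- key combinatorial fact
  have key : ∀ W ⊆ S, (∑ w ∈ W, f w = k) → ∃ v ∈ S, f v = k ∧ W = {v} := by
    intro W hWS hWk
    have h1 : W.card ≤ 1 := by
      by_contra h
      exact hk2 ⟨W, hWS, by omega, hWk⟩
    have h0 : W.card ≠ 0 := by
      intro h
      rw [Finset.card_eq_zero.mp h, Finset.sum_empty] at hWk
      omega
    have hcard : W.card = 1 := by omega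
    obtain ⟨v, rfl⟩ := Finset.card_eq_one.mp hcard
    rw [Finset.sum_singleton] at hWk
    exact ⟨v, hWS (Finset.mem_singleton_self v), hWk, rfl⟩
  -- zero-or-singleton sum fact
  have sum_zero : ∀ W ⊆ S, (∑ w ∈ W, f w = 0) → W = ∅ := by
    intro W hWS hW0
    by_contra h
    obtain ⟨w, hw⟩ := Finset.nonempty_of_ne_empty h
    have := Finset.single_le_sum (f := f) (fun i _ => Nat.zero_le _) hw
    have := hf w (hWS hw)
    omega
  -- expansion of the polynomial
  have hexp : expolM G S f = ∑ T ∈ S.powerset, ∑ U ∈ T.powerset,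
      C ((-1 : ℝ)^U.card * c T)
        * X ^ (((∑ v ∈ S, f v) - (∑ v ∈ T, f v)) + ∑ u ∈ U, f u) := by
    unfold expolM
    refine Finset.sum_congr rfl fun T _ => ?_
    have hp : (∏ v ∈ T, (1 - (X : Polynomial ℝ) ^ f v))
        = ∑ U ∈ T.powerset, (-1 : Polynomial ℝ)^U.card * X ^ (∑ u ∈ U, f u) := by
      calc ∏ v ∈ T, (1 - (X : Polynomial ℝ) ^ f v)
          = ∏ v ∈ T, (-(X : Polynomial ℝ) ^ f v + 1) := by
            refine Finset.prod_congr rfl fun v _ => by ring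
        _ = ∑ U ∈ T.powerset,
              (∏ u ∈ U, -(X:Polynomial ℝ)^ f u) * ∏ v ∈ T \ U, (1:Polynomial ℝ) :=
            Finset.prod_add _ _ T
        _ = _ := by
            refine Finset.sum_congr rfl fun U _ => ?_
            rw [Finset.prod_const_one, mul_one]
            rw [show (fun u => -(X:Polynomial ℝ)^ f u)
                = fun u => (-1) * (X:Polynomial ℝ)^ f u by funext u; ring]
            rw [Finset.prod_mul_distrib, Finset.prod_const, Finset.prod_pow_eq_pow_sum]
    rw [hp, Finset.mul_sum]
    refine Finset.sum_congr rfl fun U _ => ?_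
    simp only [hc, map_mul, map_pow, map_neg, map_one, Polynomial.C_eq_natCast]
    ring
  -- the coefficient as a double sum
  have hco : (expolM G S f).coeff k = ∑ T ∈ S.powerset, ∑ U ∈ T.powerset,
      (if ((∑ v ∈ S, f v) - (∑ v ∈ T, f v)) + ∑ u ∈ U, f u = k
        then (-1:ℝ)^U.card * c T else 0) := by
    rw [hexp, Polynomial.finset_sum_coeff]
    refine Finset.sum_congr rfl fun T _ => ?_
    rw [Polynomial.finset_sum_coeff]
    refine Finset.sum_congr rfl fun U _ => ?_
    rw [Polynomial.coeff_C_mul, Polynomial.coeff_X_pow]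
    by_cases h : ((∑ v ∈ S, f v) - (∑ v ∈ T, f v)) + ∑ u ∈ U, f u = k
    · rw [if_pos h, if_pos h.symm, mul_one]
    · rw [if_neg (fun hh => h hh.symm), if_neg h, mul_zero]
  set g : Finset V → ℝ := fun T => ∑ U ∈ T.powerset,
      (if ((∑ v ∈ S, f v) - (∑ v ∈ T, f v)) + ∑ u ∈ U, f u = k
        then (-1:ℝ)^U.card * c T else 0) with hg
  -- structure of the exponent condition: for T ⊆ S, U ⊆ T, W := (S \ T) ∪ U
  have exponent : ∀ T ⊆ S, ∀ U ⊆ T,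
      (((∑ v ∈ S, f v) - (∑ v ∈ T, f v)) + ∑ u ∈ U, f u
        = ∑ w ∈ (S \ T) ∪ U, f w) := by
    intro T hTS U hUT
    have hdisj : Disjoint (S \ T) U :=
      Finset.disjoint_of_subset_right hUT Finset.sdiff_disjoint
    rw [Finset.sum_union hdisj]
    have := Finset.sum_sdiff (f := f) hTS
    omega
  -- value of g on S
  have hgS : g S = -(F.card * c S) := by
    rw [hg]
    simp only
    rw [← Finset.sum_filter]
    have hfe : S.powerset.filter
        (fun U => ((∑ v ∈ S, f v) - (∑ v ∈ S, f v)) + ∑ u ∈ U, f u = k)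
        = F.image (fun v => ({v} : Finset V)) := by
      ext U
      simp only [Finset.mem_filter, Finset.mem_powerset, Finset.mem_image, hF,
        Nat.sub_self, zero_add]
      constructor
      · rintro ⟨hUS, hUk⟩
        obtain ⟨v, hvS, hvk, rfl⟩ := key U hUS hUk
        exact ⟨v, ⟨hvS, hvk⟩, rfl⟩
      · rintro ⟨v, ⟨hvS, hvk⟩, rfl⟩
        exact ⟨Finset.singleton_subset_iff.mpr hvS, by simpa using hvk⟩
    rw [hfe, Finset.sum_image (by intro a _ b _ h; simpa using h)]
    simp [Finset.sum_const]
  -- value of g on S.erase v for v ∈ F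
  have hgE : ∀ v ∈ F, g (S.erase v) = c (S.erase v) := by
    intro v hv
    obtain ⟨hvS, hvk⟩ := Finset.mem_filter.mp hv
    have hsum : (∑ x ∈ S, f x) - (∑ x ∈ S.erase v, f x) = k := by
      have := Finset.add_sum_erase S f hvS
      omega
    have h1 : ∀ U ∈ (S.erase v).powerset, U ≠ ∅ →
        (if ((∑ x ∈ S, f x) - (∑ x ∈ S.erase v, f x)) + ∑ u ∈ U, f u = k
          then (-1:ℝ)^U.card * c (S.erase v) else 0) = 0 := by
      intro U hU hUne
      rw [if_neg]
      intro hcond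
      have hU0 : ∑ u ∈ U, f u = 0 := by omega
      exact hUne (sum_zero U ((Finset.mem_powerset.mp hU).trans (S.erase_subset v)) hU0)
    have h2 := Finset.sum_eq_single_of_mem (s := (S.erase v).powerset)
      (f := fun U => if ((∑ x ∈ S, f x) - (∑ x ∈ S.erase v, f x)) + ∑ u ∈ U, f u = k
          then (-1:ℝ)^U.card * c (S.erase v) else 0)
      ∅ (Finset.empty_mem_powerset _) h1
    rw [hg]
    simp only
    rw [h2]
    simp [hsum]
  -- g vanishes outside the relevant sets
  set A : Finset (Finset V) := insert S (F.image (fun v => S.erase v)) with hA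
  have hAsub : A ⊆ S.powerset := by
    intro T hT
    rw [hA, Finset.mem_insert] at hT
    rcases hT with h | hT
    · rw [h]; exact Finset.mem_powerset_self S
    · obtain ⟨v, _, rfl⟩ := Finset.mem_image.mp hT
      exact Finset.mem_powerset.mpr (S.erase_subset v)
  have hgzero : ∀ T ∈ S.powerset, T ∉ A → g T = 0 := by
    intro T hT hTA
    have hTS := Finset.mem_powerset.mp hT
    rw [hg]
    refine Finset.sum_eq_zero fun U hU => ?_
    have hUT := Finset.mem_powerset.mp hU
    rw [if_neg]
    intro hcond
    rw [exponent T hTS U hUT] at hcond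
    obtain ⟨v, hvS, hvk, hW⟩ := key _ (by
      intro x hx
      rcases Finset.mem_union.mp hx with h | h
      · exact (Finset.mem_sdiff.mp h).1
      · exact hTS (hUT h)) hcond
    by_cases hvU : v ∈ U
    · -- then S \ T = ∅, T = S
      have hTs : T = S := by
        have hST : S \ T = ∅ := by
          rw [Finset.eq_empty_iff_forall_notMem]
          intro x hx
          have : x ∈ ({v} : Finset V) := hW ▸ Finset.mem_union_left _ hx
          rw [Finset.mem_singleton] at this
          subst this
          exact (Finset.mem_sdiff.mp hx).2 (hUT hvU)
        have := Finset.sdiff_eq_empty_iff_subset.mp hST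
        exact Finset.Subset.antisymm hTS this
      exact hTA (hTs ▸ Finset.mem_insert_self S _)
    · -- then U = ∅ and S \ T = {v}, T = S.erase v
      have hUe : U = ∅ := by
        rw [Finset.eq_empty_iff_forall_notMem]
        intro x hx
        have : x ∈ ({v} : Finset V) := hW ▸ Finset.mem_union_right _ hx
        rw [Finset.mem_singleton] at this
        exact hvU (this ▸ hx)
      have hST : S \ T = {v} := by
        rw [hUe, Finset.union_empty] at hW
        exact hW
      have hTe : T = S.erase v := by
        have : S \ (S \ T) = T := Finset.sdiff_sdiff_eq_self hTS
        rw [hST] at this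
        rw [← this, Finset.erase_eq]
      refine hTA ?_
      rw [hA, Finset.mem_insert]
      right
      exact Finset.mem_image.mpr ⟨v, Finset.mem_filter.mpr ⟨hvS, hvk⟩, hTe.symm⟩
  -- put everything together
  have hSA : S ∉ F.image (fun v => S.erase v) := by
    intro h
    obtain ⟨v, hv, he⟩ := Finset.mem_image.mp h
    have hvS := (Finset.mem_filter.mp hv).1
    have : v ∈ S.erase v := he.symm ▸ hvS
    exact (Finset.notMem_erase v S) this
  have hinj : ∀ a ∈ F, ∀ b ∈ F, S.erase a = S.erase b → a = b := by
    intro a ha b hb h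
    have haS := (Finset.mem_filter.mp ha).1
    by_contra hne
    have : a ∈ S.erase b := Finset.mem_erase.mpr ⟨hne, haS⟩
    rw [← h] at this
    exact (Finset.notMem_erase a S) this
  have hmain : (expolM G S f).coeff k
      = (∑ v ∈ F, c (S.erase v)) - (F.card : ℝ) * c S := by
    rw [hco]
    rw [← Finset.sum_subset hAsub (fun T hT hTA => hgzero T hT hTA)]
    rw [hA, Finset.sum_insert hSA, Finset.sum_image hinj, hgS]
    rw [Finset.sum_congr rfl hgE]
    ring
  refine ⟨hmain, ?_⟩
  rw [hmain]
  have : (∑ v ∈ F, c (S.erase v)) - (F.card : ℝ) * c S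
      = ∑ v ∈ F, (c (S.erase v) - c S) := by
    rw [Finset.sum_sub_distrib, Finset.sum_const]
    ring
  rw [this]
  refine Finset.sum_nonpos fun v hv => ?_
  have hsub : Obs G ↑(S.erase v) ⊆ Obs G ↑S :=
    Obs_mono' G (by exact_mod_cast Finset.coe_subset.mpr (S.erase_subset v))
  have : (Obs G ↑(S.erase v)).ncard ≤ (Obs G ↑S).ncard :=
    Set.ncard_le_ncard hsub (Set.toFinite _)
  simp only [hc, sub_nonpos]
  exact_mod_cast this
end

section
/- Fix integers a ≥ 2 and ℓ ≥ 0. Let G be a finite simple graph, S ⊆ V(G) with |S| ≥ a, f : S → ℕ with f(s) ≥ 1 for all s ∈ S, and A ⊆ S with |A| = a such that every vertex of A is adjacent in G to two leaves (degree-1 vertices) of G, neither of which lies in S. Let G' be obtained by affixing the fork gadget F(ℓ,a) to G at A, and let v denote the path head of the gadget. Then, for the fragile power domination process on G' with multiset placement M(S,f), Pr_q(v is observed) = Π_{w∈A}(1 − q^{f(w)}) as polynomials in q; moreover for every vertex v' of the appended path on ℓ vertices, Pr_q(v' is observed) = Pr_q(v is observed). -/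
open Polynomial

/-- The probability (as a polynomial in the failure probability `q`) that the vertex `u`
is observed under the multiset placement `M(S,f)`:
`Pr_q(u) = Σ_{T ⊆ S, u ∈ Obs(G;T)} q^{f(S∖T)} Π_{s∈T}(1 − q^{f(s)})`.
(For `T ⊆ S` we have `f(S∖T) = f(S) − f(T)`.) -/
noncomputable def prObs {V : Type*} (G : SimpleGraph V) (S : Finset V) (f : V → ℕ)
    (u : V) : Polynomial ℝ :=
  ∑ T ∈ S.powerset,
    Set.indicator (Obs G ↑T)
      (fun _ => X ^ ((∑ v ∈ S, f v) - ∑ v ∈ T, f v) * ∏ v ∈ T, (1 - X ^ f v)) u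

/-- The vertices of the graph obtained by affixing the fork gadget `F(ℓ,a)` to a graph on `V`:
the original vertices, `a` subdivision vertices, the center of the star, the path head, and
the `ℓ` vertices of the appended path. -/
inductive ForkVert (V : Type) (a ℓ : ℕ) : Type
  | orig : V → ForkVert V a ℓ
  | sub : Fin a → ForkVert V a ℓ
  | center : ForkVert V a ℓ
  | head : ForkVert V a ℓ
  | path : Fin ℓ → ForkVert V a ℓ

/-- The adjacency generating relation of the fork-gadget extension: original edges of `G`;
the `i`-th affix vertex `e i` is adjacent to the `i`-th subdivision vertex; each subdivision
vertex is adjacent to the center; the center is adjacent to the path head; and the path head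
starts the appended path on `ℓ` vertices. -/
def forkRel {V : Type} (G : SimpleGraph V) (a ℓ : ℕ) (e : Fin a → V) :
    ForkVert V a ℓ → ForkVert V a ℓ → Prop
  | ForkVert.orig u, ForkVert.orig v => G.Adj u v
  | ForkVert.orig u, ForkVert.sub i => u = e i
  | ForkVert.sub _, ForkVert.center => True
  | ForkVert.center, ForkVert.head => True
  | ForkVert.head, ForkVert.path j => (j : ℕ) = 0
  | ForkVert.path j, ForkVert.path j' => (j' : ℕ) = (j : ℕ) + 1
  | _, _ => False

/-- The graph obtained from `G` by affixing the fork gadget `F(ℓ,a)` at the vertices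
`e 0, …, e (a-1)`. -/
def forkGraph {V : Type} (G : SimpleGraph V) (a ℓ : ℕ) (e : Fin a → V) :
    SimpleGraph (ForkVert V a ℓ) :=
  SimpleGraph.fromRel (forkRel G a ℓ e)

/-- Embedding of the original vertex set into the extended one. -/
def origEmb (V : Type) (a ℓ : ℕ) : V ↪ ForkVert V a ℓ :=
  ⟨ForkVert.orig, fun x y h => by injection h⟩

/-- Extension of a sensor multiplicity function to the extended vertex set (no sensors are
placed on gadget vertices, so the values there are irrelevant). -/
def liftF {V : Type} (a ℓ : ℕ) (f : V → ℕ) : ForkVert V a ℓ → ℕ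
  | ForkVert.orig v => f v
  | _ => 1

/-!
Fix the set `T ⊆ S` of PMUs that survive. If every affix vertex `e i` lies in `T`, the
subdivision vertices are observed, one of them forces the center, the center forces the path
head, and the head forces the appended path vertex by vertex. If some `e i` is missing from `T`,
then its subdivision vertex, a leaf at `e i` outside `S`, the path head and the appended path form
a fort (no vertex outside it has exactly one neighbor in it) disjoint from `N[T]`, so none of them
is ever observed. Thus a vertex of the tail is observed exactly when `A ⊆ T`, and summing the
weights of those `T` leaves `∏_{w ∈ A} (1 - q^{f w})`.
-/

namespace Finset

variable {ι R : Type*} [CommRing R] [DecidableEq ι]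

theorem sum_powerset_ite_superset (S A : Finset ι) (hAS : A ⊆ S) (p : ι → R) :
    ∑ T ∈ S.powerset, (if A ⊆ T then (∏ v ∈ T, (1 - p v)) * ∏ v ∈ S \ T, p v else 0)
      = ∏ v ∈ A, (1 - p v) := by
  have hprod : ∏ v ∈ A, (1 - p v) = ∏ v ∈ S, ((1 - p v) + if v ∈ A then 0 else p v) := by
    simp only [add_ite, add_zero, sub_add_cancel, prod_ite_mem, inter_eq_right.mpr hAS]
  rw [hprod, prod_add]
  refine sum_congr rfl fun T hT => ?_
  split_ifs with hAT
  · congr 1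
    refine prod_congr rfl fun v hv => ?_
    rw [if_neg fun hvA => (mem_sdiff.mp hv).2 (hAT hvA)]
  · obtain ⟨v, hvA, hvT⟩ := not_subset.mp hAT
    rw [prod_eq_zero (mem_sdiff.mpr ⟨hAS hvA, hvT⟩) (by simp [hvA]), mul_zero]

end Finset

section PowerDomination

variable {W : Type*} {G : SimpleGraph W} {S B F : Set W}

theorem adj_iff_of_neighborSet_eq_singleton {l v : W} (hl : G.neighborSet l = {v}) (u : W) :
    G.Adj l u ↔ u = v := by
  rw [← SimpleGraph.mem_neighborSet, hl, Set.mem_singleton_iff]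

theorem self_mem_closedNbhd {v : W} (hv : v ∈ S) : v ∈ closedNbhd G S :=
  Set.mem_biUnion hv (Set.mem_insert v _)

theorem mem_closedNbhd_of_adj {v w : W} (hv : v ∈ S) (hvw : G.Adj v w) : w ∈ closedNbhd G S :=
  Set.mem_biUnion hv (Set.mem_insert_of_mem v hvw)

theorem mem_Obs_iff {u : W} :
    u ∈ Obs G S ↔ ∀ B, closedNbhd G S ⊆ B → PDClosed G B → u ∈ B := by
  simp [Obs, and_imp]

theorem PDClosed.mem_of_adj (hB : PDClosed G B) {x y : W} (hx : x ∈ B) (hxy : G.Adj x y)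
    (hothers : ∀ z, G.Adj x z → z ≠ y → z ∈ B) : y ∈ B := by
  by_contra hy
  refine hy (hB x hx y (Set.eq_singleton_iff_unique_mem.mpr ⟨⟨hxy, hy⟩, ?_⟩))
  exact fun z ⟨hxz, hz⟩ => by_contra fun hzy => hz (hothers z hxz hzy)

def IsFort (G : SimpleGraph W) (F : Set W) : Prop :=
  ∀ x ∉ F, ∀ y ∈ F, G.Adj x y → ∃ z ∈ F, z ≠ y ∧ G.Adj x z

theorem IsFort.pdClosed_compl (hF : IsFort G F) : PDClosed G Fᶜ := by
  intro x hx y hxy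
  have hy : y ∈ G.neighborSet x \ Fᶜ := hxy ▸ rfl
  obtain ⟨z, hzF, hzy, hxz⟩ := hF x hx y (not_not.mp hy.2) hy.1
  exact absurd (hxy.subset ⟨hxz, not_not.mpr hzF⟩) hzy

theorem IsFort.disjoint_Obs (hF : IsFort G F) (hS : Disjoint (closedNbhd G S) F) :
    Disjoint (Obs G S) F :=
  Set.subset_compl_iff_disjoint_right.mp <| Set.sInter_subset_of_mem
    (show Fᶜ ∈ {B | closedNbhd G S ⊆ B ∧ PDClosed G B} from
      ⟨Set.subset_compl_iff_disjoint_right.mpr hS, hF.pdClosed_compl⟩)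

end PowerDomination

theorem prObs_eq_prod_of_mem_Obs_iff {W : Type*} (G : SimpleGraph W) (S A : Finset W)
    (hAS : A ⊆ S) (f : W → ℕ) (u : W) (hu : ∀ T ⊆ S, u ∈ Obs G T ↔ A ⊆ T) :
    prObs G S f u = ∏ w ∈ A, (1 - X ^ f w) := by
  classical
  rw [prObs, ← Finset.sum_powerset_ite_superset S A hAS]
  refine Finset.sum_congr rfl fun T hT => ?_
  have hTS := Finset.mem_powerset.mp hT
  have hexp : (∑ v ∈ S, f v) - ∑ v ∈ T, f v = ∑ v ∈ S \ T, f v := by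
    rw [← Finset.sum_sdiff hTS, Nat.add_sub_cancel]
  rw [Set.indicator_apply, hexp, ← Finset.prod_pow_eq_pow_sum, mul_comm]
  exact if_congr (hu T hTS) rfl rfl

open ForkVert

section Fork

variable {V : Type} {G : SimpleGraph V} {a ℓ : ℕ} {e : Fin a → V} {T : Set V}

theorem forkGraph_tail_mem_of_pdClosed (ha : 0 < a) (hT : Set.range e ⊆ T)
    {B : Set (ForkVert V a ℓ)} (hN : closedNbhd (forkGraph G a ℓ e) (orig '' T) ⊆ B)
    (hB : PDClosed (forkGraph G a ℓ e) B) : head ∈ B ∧ ∀ j, path j ∈ B := by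
  have hplaced : ∀ i, (orig (e i) : ForkVert V a ℓ) ∈ orig '' T := fun i =>
    Set.mem_image_of_mem _ (hT (Set.mem_range_self i))
  have horig : ∀ i, orig (e i) ∈ B := fun i => hN (self_mem_closedNbhd (hplaced i))
  have hsub : ∀ i, sub i ∈ B := fun i =>
    hN (mem_closedNbhd_of_adj (hplaced i) (by simp [forkGraph, forkRel]))
  have hcenter : center ∈ B := hB.mem_of_adj (hsub ⟨0, ha⟩) (by simp [forkGraph, forkRel])
    fun z hz hne => by cases z <;> simp_all [forkGraph, forkRel]
  have hhead : head ∈ B := hB.mem_of_adj hcenter (by simp [forkGraph, forkRel])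
    fun z hz hne => by cases z <;> simp_all [forkGraph, forkRel]
  have hpath : ∀ k, ∀ j : Fin ℓ, (j : ℕ) ≤ k → path j ∈ B := by
    intro k
    induction k with
    | zero =>
      intro j hj
      refine hB.mem_of_adj hhead (by simp_all [forkGraph, forkRel]) fun z hz hne => ?_
      cases z <;> simp_all [forkGraph, forkRel, Fin.ext_iff]
    | succ k ih =>
      intro j hj
      rcases Nat.lt_or_eq_of_le hj with hj | hj
      · exact ih j (Nat.lt_succ_iff.mp hj)
      have hk : k < ℓ := by omega
      refine hB.mem_of_adj (ih ⟨k, hk⟩ le_rfl) (by simp [forkGraph, forkRel, Fin.ext_iff, hj])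
        fun z hz hne => ?_
      cases z with
      | head => exact hhead
      | path j' => exact ih j' (by simp_all [forkGraph, forkRel, Fin.ext_iff])
      | _ => simp [forkGraph, forkRel] at hz
  exact ⟨hhead, fun j => hpath j j le_rfl⟩

theorem isFort_forkGraph {i₀ : Fin a} {l : V} (hl : G.neighborSet l = {e i₀})
    (hel : l ∉ Set.range e) :
    IsFort (forkGraph G a ℓ e) ({sub i₀, head, orig l} ∪ Set.range path) := by
  have hadj := adj_iff_of_neighborSet_eq_singleton hl
  intro x hx y hy hxy
  rcases hy with (rfl | rfl | rfl) | ⟨j, rfl⟩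
  · cases x with
    | orig u => exact ⟨orig l, by simp, by simp, by simp_all [forkGraph, forkRel]⟩
    | center => exact ⟨head, by simp, by simp, by simp [forkGraph, forkRel]⟩
    | _ => simp_all [forkGraph, forkRel]
  · cases x with
    | center => exact ⟨sub i₀, by simp, by simp, by simp [forkGraph, forkRel]⟩
    | _ => simp_all [forkGraph, forkRel]
  · cases x with
    | orig u =>
      exact ⟨sub i₀, by simp, by simp, by simp_all [forkGraph, forkRel, G.adj_comm u]⟩
    | sub i => exact (hel ⟨i, by simpa [forkGraph, forkRel, eq_comm] using hxy.symm⟩).elim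
    | _ => simp_all [forkGraph, forkRel]
  · cases x <;> simp_all [forkGraph, forkRel]

theorem disjoint_closedNbhd_forkGraph_fort {i₀ : Fin a} {l : V} (hi₀ : e i₀ ∉ T)
    (hlT : l ∉ T) (hl : G.neighborSet l = {e i₀}) :
    Disjoint (closedNbhd (forkGraph G a ℓ e) (orig '' T))
      ({sub i₀, head, orig l} ∪ Set.range path) := by
  have hadj := adj_iff_of_neighborSet_eq_singleton hl
  refine Set.disjoint_left.mpr fun z hz hzF => ?_
  simp only [closedNbhd, Set.mem_iUnion, Set.mem_image] at hz
  obtain ⟨_, ⟨w, hwT, rfl⟩, hz⟩ := hz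
  rcases hzF with (rfl | rfl | rfl) | ⟨j, rfl⟩ <;>
    simp [forkGraph, forkRel, G.adj_comm w, hadj] at hz
  · exact hi₀ (hz ▸ hwT)
  · rcases hz with rfl | ⟨-, rfl⟩
    exacts [hlT hwT, hi₀ hwT]

theorem mem_Obs_forkGraph_iff (ha : 0 < a)
    (hleaf : ∀ i, ∃ l ∉ T, l ∉ Set.range e ∧ G.neighborSet l = {e i})
    {z : ForkVert V a ℓ} (hz : z = head ∨ ∃ j, z = path j) :
    z ∈ Obs (forkGraph G a ℓ e) (orig '' T) ↔ Set.range e ⊆ T := by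
  constructor
  · rintro hzObs _ ⟨i, rfl⟩
    by_contra hi
    obtain ⟨l, hlT, hel, hl⟩ := hleaf i
    refine Set.disjoint_left.mp ((isFort_forkGraph hl hel).disjoint_Obs
      (disjoint_closedNbhd_forkGraph_fort hi hlT hl)) hzObs ?_
    rcases hz with rfl | ⟨j, rfl⟩ <;> simp
  · intro hT
    refine mem_Obs_iff.mpr fun B hN hB => ?_
    have htail := forkGraph_tail_mem_of_pdClosed ha hT hN hB
    rcases hz with rfl | ⟨j, rfl⟩
    exacts [htail.1, htail.2 j]

end Fork

theorem stmt12_general {V : Type} (a ℓ : ℕ) (ha : 2 ≤ a)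
    (G : SimpleGraph V) (S : Finset V)
    (f : V → ℕ)
    (A : Finset V) (hAS : A ⊆ S)
    (e : Fin a ↪ V) (he : Finset.univ.map e = A)
    (hleaves : ∀ v ∈ A, ∃ l₁ l₂ : V, l₁ ≠ l₂ ∧ l₁ ∉ S ∧ l₂ ∉ S ∧
        G.neighborSet l₁ = {v} ∧ G.neighborSet l₂ = {v}) :
    prObs (forkGraph G a ℓ ⇑e) (S.map (origEmb V a ℓ)) (liftF a ℓ f) ForkVert.head
        = ∏ w ∈ A, (1 - X ^ f w) ∧
      ∀ j : Fin ℓ,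
        prObs (forkGraph G a ℓ ⇑e) (S.map (origEmb V a ℓ)) (liftF a ℓ f)
            (ForkVert.path j)
          = prObs (forkGraph G a ℓ ⇑e) (S.map (origEmb V a ℓ)) (liftF a ℓ f)
              ForkVert.head := by
  have hA : (A : Set V) = Set.range e := by simp [← he]
  have heA : ∀ i, e i ∈ A := fun i => by
    rw [← Finset.mem_coe, hA]
    exact Set.mem_range_self i
  have hleaf :
      ∀ T ⊆ S, ∀ i, ∃ l ∉ (T : Set V), l ∉ Set.range e ∧ G.neighborSet l = {e i} := by
    intro T hTS i
    obtain ⟨l, -, -, hlS, -, hl, -⟩ := hleaves (e i) (heA i)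
    refine ⟨l, fun hlT => hlS (hTS hlT), ?_, hl⟩
    rintro ⟨i', rfl⟩
    exact hlS (hAS (heA i'))
  have htail : ∀ z : ForkVert V a ℓ, (z = head ∨ ∃ j, z = path j) →
      prObs (forkGraph G a ℓ ⇑e) (S.map (origEmb V a ℓ)) (liftF a ℓ f) z
        = ∏ w ∈ A, (1 - X ^ f w) := fun z hz => by
    rw [show ∏ w ∈ A, (1 - (X : ℝ[X]) ^ f w)
        = ∏ w ∈ A.map (origEmb V a ℓ), (1 - X ^ liftF a ℓ f w) by
      rw [Finset.prod_map]; rfl]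
    refine prObs_eq_prod_of_mem_Obs_iff _ _ _ (Finset.map_subset_map.mpr hAS) _ _ fun T hT => ?_
    obtain ⟨T, hTS, rfl⟩ := Finset.subset_map_iff.mp hT
    rw [Finset.map_subset_map, ← Finset.coe_subset, hA, Finset.coe_map]
    exact mem_Obs_forkGraph_iff (by omega) (hleaf T hTS) hz
  exact ⟨htail _ (Or.inl rfl),
    fun j => (htail _ (Or.inr ⟨j, rfl⟩)).trans (htail _ (Or.inl rfl)).symm⟩

theorem stmt12 {V : Type} [Fintype V] (a ℓ : ℕ) (ha : 2 ≤ a)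
    (G : SimpleGraph V) (S : Finset V) (hS : a ≤ S.card)
    (f : V → ℕ) (hf : ∀ v ∈ S, 1 ≤ f v)
    (A : Finset V) (hAS : A ⊆ S) (hAcard : A.card = a)
    (e : Fin a ↪ V) (he : Finset.univ.map e = A)
    (hleaves : ∀ v ∈ A, ∃ l₁ l₂ : V, l₁ ≠ l₂ ∧ l₁ ∉ S ∧ l₂ ∉ S ∧
        G.neighborSet l₁ = {v} ∧ G.neighborSet l₂ = {v}) :
    prObs (forkGraph G a ℓ ⇑e) (S.map (origEmb V a ℓ)) (liftF a ℓ f) ForkVert.head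
        = ∏ w ∈ A, (1 - X ^ f w) ∧
      ∀ j : Fin ℓ,
        prObs (forkGraph G a ℓ ⇑e) (S.map (origEmb V a ℓ)) (liftF a ℓ f)
            (ForkVert.path j)
          = prObs (forkGraph G a ℓ ⇑e) (S.map (origEmb V a ℓ)) (liftF a ℓ f)
              ForkVert.head :=
  stmt12_general a ℓ ha G S f A hAS e he hleaves
end
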